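/- Let E be a set of lattice equations (over arbitrary variable types) and let V be the class of all lattices in which every equation of E holds under every valuation. Assume V contains a lattice with at least two elements. Then for any lattice terms t_1, t_2 over a variable type β, the terms t_1, t_2 are V-dependent if and only if ⊨_V t_1 ≤ t_2 or ⊨_V t_2 ≤ t_1. -/

import Mathlib

/-- Lattice terms over variable type `α`: first-order terms in the language with exactly
two binary function symbols (meet and join). -/
inductive LatTerm (α : Type) : Type
  | var : α → LatTerm α
  | meet : LatTerm α → LatTerm α → LatTerm α
  | join : LatTerm α → LatTerm α → LatTerm α

namespace LatTerm

/-- Realization of a lattice term in a lattice `M` under a valuation `v`. -/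
def realize {α M : Type} [Lattice M] (v : α → M) : LatTerm α → M
  | var a => v a
  | meet s t => realize v s ⊓ realize v t
  | join s t => realize v s ⊔ realize v t

/-- Simultaneous substitution of lattice terms for variables. -/
def subst {α β : Type} (σ : α → LatTerm β) : LatTerm α → LatTerm β
  | var a => σ a
  | meet s t => meet (subst σ s) (subst σ t)
  | join s t => join (subst σ s) (subst σ t)

end LatTerm

/-- A lattice equation: a pair of lattice terms. -/
abbrev LatEq (α : Type) : Type := LatTerm α × LatTerm α

/-- The inequation `s ≤ t`, as the equation `s ⊓ t ≈ s`. -/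
def leEq {α : Type} (s t : LatTerm α) : LatEq α := (s.meet t, s)

/-- Lat-validity: the two terms have equal realizations in every lattice under
every valuation. -/
def LatValid {α : Type} (e : LatEq α) : Prop :=
  ∀ (M : Type) [Lattice M] (v : α → M), e.1.realize v = e.2.realize v

/-- The join, with a fixed bracketing, of `f 0, …, f m`. -/
def finJoin {α : Type} : {m : ℕ} → (Fin (m + 1) → LatTerm α) → LatTerm α
  | 0, f => f 0
  | _ + 1, f => LatTerm.join (finJoin fun k => f k.castSucc) (f (Fin.last _))

/-- The meet, with a fixed bracketing, of `f 0, …, f m`. -/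
def finMeet {α : Type} : {m : ℕ} → (Fin (m + 1) → LatTerm α) → LatTerm α
  | 0, f => f 0
  | _ + 1, f => LatTerm.meet (finMeet fun k => f k.castSucc) (f (Fin.last _))


/-- The lattice `M` belongs to the class `V` of all lattices satisfying every
equation of `E` (a set of lattice equations over arbitrary variable types)
under every valuation. -/
def InLatVariety (E : Set (Σ α : Type, LatEq α)) (M : Type) [Lattice M] : Prop :=
  ∀ q ∈ E, ∀ v : q.1 → M, q.2.1.realize v = q.2.2.realize v

/-- `⊨_V e`: the two terms of `e` have equal realizations in every member of `V`
under every valuation, where `V` is the class of lattices determined by `E`. -/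
def VLatValid (E : Set (Σ α : Type, LatEq α)) {β : Type} (e : LatEq β) : Prop :=
  ∀ (M : Type) [Lattice M], InLatVariety E M →
    ∀ v : β → M, e.1.realize v = e.2.realize v

/-- `t₁, t₂` are `V`-dependent: some equation `e` over `Fin 2` satisfies
`⊨_V e(t₁, t₂)` but not `⊨_V e`. -/
def VLatDependent (E : Set (Σ α : Type, LatEq α)) {β : Type}
    (t₁ t₂ : LatTerm β) : Prop :=
  ∃ e : LatEq (Fin 2),
    VLatValid E (e.1.subst ![t₁, t₂], e.2.subst ![t₁, t₂]) ∧ ¬ VLatValid E e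

/-! The free lattice on two generators `a, b` is the four-element lattice `{a ⊓ b, a, b, a ⊔ b}`,
realized as `Bool × Bool` with `a = (true, false)` and `b = (false, true)`. Hence an equation in two
variables either holds in every lattice, or its two sides name distinct elements of `Bool × Bool`;
these differ in some coordinate, and meeting both sides with the corresponding generator shows that
the equation forces `a ≤ b` (first coordinate) or `b ≤ a` (second coordinate). So `ε(t₁, t₂)` can
only hold in `V` without `ε` holding if `t₁ ≤ t₂` or `t₂ ≤ t₁` does. Conversely `x₀ ≤ x₁` fails in
every nontrivial lattice. -/

namespace LatTerm

theorem realize_subst {α β M : Type} [Lattice M] (σ : α → LatTerm β) (v : β → M)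
    (t : LatTerm α) : (t.subst σ).realize v = t.realize fun a => (σ a).realize v := by
  induction t with
  | var a => rfl
  | meet s t hs ht => simp only [subst, realize, hs, ht]
  | join s t hs ht => simp only [subst, realize, hs, ht]

theorem realize_comp_latticeHom {α M N : Type} [Lattice M] [Lattice N] (f : LatticeHom M N)
    (v : α → M) (t : LatTerm α) : t.realize (f ∘ v) = f (t.realize v) := by
  induction t with
  | var a => rfl
  | meet s t hs ht => simp only [realize, hs, ht, map_inf]
  | join s t hs ht => simp only [realize, hs, ht, map_sup]

end LatTerm

def twoGen : Fin 2 → Bool × Bool := ![(true, false), (false, true)]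

def twoGenHom {M : Type} [Lattice M] (a b : M) : LatticeHom (Bool × Bool) M where
  toFun
    | (true, false) => a
    | (false, true) => b
    | (false, false) => a ⊓ b
    | (true, true) => a ⊔ b
  map_sup' := by
    rintro ⟨_ | _, _ | _⟩ ⟨_ | _, _ | _⟩ <;> simp [sup_comm]
  map_inf' := by
    rintro ⟨_ | _, _ | _⟩ ⟨_ | _, _ | _⟩ <;> simp [inf_comm]

theorem realize_eq_twoGenHom {M : Type} [Lattice M] (v : Fin 2 → M) (t : LatTerm (Fin 2)) :
    t.realize v = twoGenHom (v 0) (v 1) (t.realize twoGen) := by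
  have hv : v = twoGenHom (v 0) (v 1) ∘ twoGen := by
    funext i
    fin_cases i <;> rfl
  conv_lhs => rw [hv]
  exact LatTerm.realize_comp_latticeHom _ _ t

theorem latValid_of_realize_twoGen_eq {e : LatEq (Fin 2)}
    (h : e.1.realize twoGen = e.2.realize twoGen) : LatValid e := by
  intro M _ v
  rw [realize_eq_twoGenHom v e.1, realize_eq_twoGenHom v e.2, h]

theorem le_of_twoGenHom_eq_of_fst_ne {M : Type} [Lattice M] {a b : M} {x y : Bool × Bool}
    (hxy : x.1 ≠ y.1) (h : twoGenHom a b x = twoGenHom a b y) : a ≤ b := by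
  have hmeet : twoGenHom a b (x ⊓ (true, false)) = twoGenHom a b (y ⊓ (true, false)) := by
    rw [map_inf, map_inf, h]
  rcases x with ⟨_ | _, _⟩ <;> rcases y with ⟨_ | _, _⟩ <;> simp_all [twoGenHom]

theorem le_of_twoGenHom_eq_of_snd_ne {M : Type} [Lattice M] {a b : M} {x y : Bool × Bool}
    (hxy : x.2 ≠ y.2) (h : twoGenHom a b x = twoGenHom a b y) : b ≤ a := by
  have hmeet : twoGenHom a b (x ⊓ (false, true)) = twoGenHom a b (y ⊓ (false, true)) := by
    rw [map_inf, map_inf, h]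
  rcases x with ⟨_, _ | _⟩ <;> rcases y with ⟨_, _ | _⟩ <;> simp_all [twoGenHom]

theorem LatValid.vLatValid {E : Set (Σ α : Type, LatEq α)} {β : Type} {e : LatEq β}
    (h : LatValid e) : VLatValid E e :=
  fun M _ _ v => h M v

theorem vLatValid_leEq_iff {E : Set (Σ α : Type, LatEq α)} {β : Type} {s t : LatTerm β} :
    VLatValid E (leEq s t) ↔
      ∀ (M : Type) [Lattice M], InLatVariety E M → ∀ v : β → M, s.realize v ≤ t.realize v :=
  forall₂_congr fun _ _ => forall₂_congr fun _ _ => inf_eq_left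

theorem not_vLatValid_leEq_var {E : Set (Σ α : Type, LatEq α)} {M : Type} [Lattice M]
    (hM : InLatVariety E M) {a b : M} (hab : ¬ a ≤ b) {β : Type} {i j : β} (hij : i ≠ j) :
    ¬ VLatValid E (leEq (.var i) (.var j)) := by
  classical
  intro h
  have := vLatValid_leEq_iff.mp h M hM fun k => if k = i then a else b
  simp only [LatTerm.realize, if_neg hij.symm] at this
  exact hab this

theorem vLatValid_leEq_or_of_vLatValid_subst {E : Set (Σ α : Type, LatEq α)} {β : Type}
    {t₁ t₂ : LatTerm β} {e : LatEq (Fin 2)}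
    (hsubst : VLatValid E (e.1.subst ![t₁, t₂], e.2.subst ![t₁, t₂]))
    (hne : e.1.realize twoGen ≠ e.2.realize twoGen) :
    VLatValid E (leEq t₁ t₂) ∨ VLatValid E (leEq t₂ t₁) := by
  have hhom : ∀ (M : Type) [Lattice M], InLatVariety E M → ∀ v : β → M,
      twoGenHom (t₁.realize v) (t₂.realize v) (e.1.realize twoGen) =
        twoGenHom (t₁.realize v) (t₂.realize v) (e.2.realize twoGen) := by
    intro M _ hM v
    have := hsubst M hM v
    simp only [LatTerm.realize_subst] at this
    rwa [realize_eq_twoGenHom, realize_eq_twoGenHom _ e.2] at this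
  rcases not_and_or.mp (Prod.ext_iff.not.mp hne) with hfst | hsnd
  · exact .inl <| vLatValid_leEq_iff.mpr fun M _ hM v =>
      le_of_twoGenHom_eq_of_fst_ne hfst (hhom M hM v)
  · exact .inr <| vLatValid_leEq_iff.mpr fun M _ hM v =>
      le_of_twoGenHom_eq_of_snd_ne hsnd (hhom M hM v)

theorem stmt19 (E : Set (Σ α : Type, LatEq α))
    (hV : ∃ (M : Type) (inst : Lattice M),
      @InLatVariety E M inst ∧ ∃ a b : M, a ≠ b)
    {β : Type} (t₁ t₂ : LatTerm β) :
    VLatDependent E t₁ t₂ ↔ VLatValid E (leEq t₁ t₂) ∨ VLatValid E (leEq t₂ t₁) := by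
  obtain ⟨M, _, hM, a, b, hab⟩ := hV
  obtain ⟨x, y, hxy⟩ : ∃ x y : M, ¬ x ≤ y :=
    hab.not_le_or_not_ge.elim (fun h => ⟨a, b, h⟩) (fun h => ⟨b, a, h⟩)
  constructor
  · rintro ⟨e, hsubst, hnot⟩
    exact vLatValid_leEq_or_of_vLatValid_subst hsubst fun h =>
      hnot (latValid_of_realize_twoGen_eq h).vLatValid
  · rintro (h | h)
    · exact ⟨leEq (.var 0) (.var 1), h, not_vLatValid_leEq_var hM hxy (by decide)⟩
    · exact ⟨leEq (.var 1) (.var 0), h, not_vLatValid_leEq_var hM hxy (by decide)⟩
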